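/- arXiv:1709.04063 — 2 statements merged into one kernel-verified Lean document; each statement's English description precedes it below -/
import Mathlib

section
/- Let (X,d) be a metric space and p_1, …, p_k ∈ X (k ≥ 1). Then for all x, y, z, w ∈ X, μ_P(x,y)·μ_P(z,w) ≤ 4·(27/2)^{2k} · max(μ_P(x,z)·μ_P(y,w), μ_P(x,w)·μ_P(y,z)). -/
noncomputable def muPt {X : Type*} [MetricSpace X] (p x y : X) : ℝ :=
  dist x y + Real.sqrt (dist x p * dist y p)

noncomputable def muSet {X : Type*} [MetricSpace X] {k : ℕ} (p : Fin k → X)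
    (x y : X) : ℝ :=
  ∏ i : Fin k, muPt (p i) x y

lemma core_aux (A B s α β γ ε : ℝ) (hA : 0 ≤ A) (hB : 0 ≤ B) (hs : 0 ≤ s)
    (hα : 0 ≤ α) (hβ : 0 ≤ β) (hγ : 0 ≤ γ) (hε : 0 ≤ ε)
    (hsA : s ≤ A) (hsB : s ≤ B)
    (hac : γ^2 ≤ α^2 + s)
    (hb : β^2 ≤ γ^2 + B) (he : ε^2 ≤ α^2 + A)
    (h1 : α ≤ γ) :
    B*(γ*ε) + A*(α*β) ≤ 2*(A*B) + 2*(B*(α*ε)) + 2*(A*(β*γ)) := by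
  have nAB : 0 ≤ A*B := mul_nonneg hA hB
  have nAβγ : 0 ≤ A*(β*γ) := mul_nonneg hA (mul_nonneg hβ hγ)
  have nBαε : 0 ≤ B*(α*ε) := mul_nonneg hB (mul_nonneg hα hε)
  have f1 : 0 ≤ A*β*(γ-α) := mul_nonneg (mul_nonneg hA hβ) (sub_nonneg.2 h1)
  rcases le_total (A*β) (B*ε) with h2 | h2
  · rcases le_total s (α^2) with h3 | h3
    · -- s ≤ α², so γ ≤ 2α
      have hγ2 : γ ≤ 2*α := by nlinarith [mul_nonneg hα hγ, sq_nonneg α, sq_nonneg γ]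
      nlinarith [f1, mul_nonneg (mul_nonneg hB hε) (by linarith : (0:ℝ) ≤ 2*α - γ)]
    · -- α² ≤ s
      have g1 : (γ-α)^2 ≤ s := by nlinarith [mul_nonneg hα (sub_nonneg.2 h1)]
      have g2 : ε^2 ≤ 2*A := by linarith
      have h4 : ((γ-α)*ε)^2 ≤ s * (2*A) :=
        by nlinarith [mul_le_mul g1 g2 (sq_nonneg ε) hs]
      have h5 : (γ-α)*ε ≤ 2*A := by
        apply le_of_pow_le_pow_left₀ two_ne_zero (by linarith : (0:ℝ) ≤ 2*A)
        nlinarith [mul_le_mul_of_nonneg_left hsA hA]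
      nlinarith [f1, mul_le_mul_of_nonneg_left h5 hB]
  · nlinarith [mul_nonneg (sub_nonneg.2 h1) (sub_nonneg.2 h2)]

lemma core_ineq (A B s α β γ ε : ℝ) (hA : 0 ≤ A) (hB : 0 ≤ B) (hs : 0 ≤ s)
    (hα : 0 ≤ α) (hβ : 0 ≤ β) (hγ : 0 ≤ γ) (hε : 0 ≤ ε)
    (hsA : s ≤ A) (hsB : s ≤ B)
    (hac : γ^2 ≤ α^2 + s) (hca : α^2 ≤ γ^2 + s)
    (hb : β^2 ≤ γ^2 + B) (he : ε^2 ≤ α^2 + A) :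
    B*(γ*ε) + A*(α*β) ≤ 2*(A*B) + 2*(B*(α*ε)) + 2*(A*(β*γ)) := by
  rcases le_total α γ with h1 | h1
  · exact core_aux A B s α β γ ε hA hB hs hα hβ hγ hε hsA hsB hac hb he h1
  · have := core_aux B A s γ ε α β hB hA hs hγ hε hα hβ hsB hsA hca he hb h1
    linarith

lemma muPt_nonneg {X : Type*} [MetricSpace X] (p x y : X) : 0 ≤ muPt p x y :=
  add_nonneg dist_nonneg (Real.sqrt_nonneg _)

lemma muPt_comm {X : Type*} [MetricSpace X] (p x y : X) : muPt p x y = muPt p y x := by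
  unfold muPt; rw [dist_comm x y, mul_comm]

lemma muPt_quad {X : Type*} [MetricSpace X] (p x y z w : X)
    (h1 : dist x z ≤ dist x w) (h2 : dist x z ≤ dist y z) :
    muPt p x y * muPt p z w ≤ 12 * (muPt p x w * muPt p y z) := by
  have hα : (0:ℝ) ≤ Real.sqrt (dist x p) := Real.sqrt_nonneg _
  have hβ : (0:ℝ) ≤ Real.sqrt (dist y p) := Real.sqrt_nonneg _
  have hγ : (0:ℝ) ≤ Real.sqrt (dist z p) := Real.sqrt_nonneg _
  have hε : (0:ℝ) ≤ Real.sqrt (dist w p) := Real.sqrt_nonneg _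
  set α := Real.sqrt (dist x p) with hαdef
  set β := Real.sqrt (dist y p) with hβdef
  set γ := Real.sqrt (dist z p) with hγdef
  set ε := Real.sqrt (dist w p) with hεdef
  have hα2 : α^2 = dist x p := Real.sq_sqrt dist_nonneg
  have hβ2 : β^2 = dist y p := Real.sq_sqrt dist_nonneg
  have hγ2 : γ^2 = dist z p := Real.sq_sqrt dist_nonneg
  have hε2 : ε^2 = dist w p := Real.sq_sqrt dist_nonneg
  have exy : muPt p x y = dist x y + α*β := by
    rw [muPt, Real.sqrt_mul dist_nonneg]
  have ezw : muPt p z w = dist z w + γ*ε := by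
    rw [muPt, Real.sqrt_mul dist_nonneg]
  have exw : muPt p x w = dist x w + α*ε := by
    rw [muPt, Real.sqrt_mul dist_nonneg]
  have eyz : muPt p y z = dist y z + β*γ := by
    rw [muPt, Real.sqrt_mul dist_nonneg]
  have hac : γ^2 ≤ α^2 + dist x z := by
    rw [hα2, hγ2]
    have := dist_triangle z x p
    rw [dist_comm z x] at this; linarith
  have hca : α^2 ≤ γ^2 + dist x z := by
    rw [hα2, hγ2]; linarith [dist_triangle x z p]
  have hbb : β^2 ≤ γ^2 + dist y z := by
    rw [hβ2, hγ2]; linarith [dist_triangle y z p]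
  have hee : ε^2 ≤ α^2 + dist x w := by
    rw [hα2, hε2]
    have := dist_triangle w x p
    rw [dist_comm w x] at this; linarith
  have core := core_ineq (dist x w) (dist y z) (dist x z) α β γ ε
    dist_nonneg dist_nonneg dist_nonneg hα hβ hγ hε h1 h2 hac hca hbb hee
  have hxy : dist x y ≤ dist x z + dist y z := by
    have := dist_triangle x z y
    rw [dist_comm z y] at this; linarith
  have hzw : dist z w ≤ dist x z + dist x w := by
    have := dist_triangle z x w
    rw [dist_comm z x] at this; linarith
  rw [exy, ezw, exw, eyz]
  have F1 : dist x y + α*β ≤ 2*(dist y z) + α*β := by linarith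
  have F2 : dist z w + γ*ε ≤ 2*(dist x w) + γ*ε := by linarith
  have F3 : (0:ℝ) ≤ dist z w + γ*ε := add_nonneg dist_nonneg (mul_nonneg hγ hε)
  have hyz0 : (0:ℝ) ≤ dist y z := dist_nonneg
  have hxw0 : (0:ℝ) ≤ dist x w := dist_nonneg
  have F4 : (0:ℝ) ≤ 2*(dist y z) + α*β := by
    have := mul_nonneg hα hβ
    linarith
  have F5 := mul_le_mul F1 F2 F3 F4
  nlinarith [core, F5, mul_nonneg hxw0 hyz0,
    mul_nonneg hxw0 (mul_nonneg hβ hγ),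
    mul_nonneg hyz0 (mul_nonneg hα hε),
    mul_nonneg (mul_nonneg hα hε) (mul_nonneg hβ hγ)]

lemma muSet_nonneg {X : Type*} [MetricSpace X] {k : ℕ} (p : Fin k → X) (x y : X) :
    0 ≤ muSet p x y :=
  Finset.prod_nonneg fun i _ => muPt_nonneg (p i) x y

lemma muSet_comm {X : Type*} [MetricSpace X] {k : ℕ} (p : Fin k → X) (x y : X) :
    muSet p x y = muSet p y x :=
  Finset.prod_congr rfl fun i _ => muPt_comm (p i) x y

lemma muSet_quad {X : Type*} [MetricSpace X] {k : ℕ} (p : Fin k → X) (x y z w : X)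
    (h1 : dist x z ≤ dist x w) (h2 : dist x z ≤ dist y z) :
    muSet p x y * muSet p z w ≤ 12^k * (muSet p x w * muSet p y z) := by
  unfold muSet
  rw [← Finset.prod_mul_distrib, ← Finset.prod_mul_distrib]
  calc (∏ i : Fin k, muPt (p i) x y * muPt (p i) z w)
      ≤ ∏ i : Fin k, 12 * (muPt (p i) x w * muPt (p i) y z) :=
        Finset.prod_le_prod
          (fun i _ => mul_nonneg (muPt_nonneg _ _ _) (muPt_nonneg _ _ _))
          (fun i _ => muPt_quad (p i) x y z w h1 h2)
    _ = 12^k * ∏ i : Fin k, muPt (p i) x w * muPt (p i) y z := by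
        rw [Finset.prod_mul_distrib, Finset.prod_const, Finset.card_univ,
          Fintype.card_fin]

theorem stmt11 {X : Type*} [MetricSpace X] (k : ℕ) (hk : 1 ≤ k)
    (p : Fin k → X) (x y z w : X) :
    muSet p x y * muSet p z w ≤
      4 * (27 / 2 : ℝ) ^ (2 * k) *
        max (muSet p x z * muSet p y w) (muSet p x w * muSet p y z) := by
  set M := max (muSet p x z * muSet p y w) (muSet p x w * muSet p y z) with hM
  have h12 : (12:ℝ)^k ≤ 4 * (27/2)^(2*k) := by
    have e1 : ((27:ℝ)/2)^(2*k) = ((729:ℝ)/4)^k := by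
      rw [pow_mul]; norm_num
    have e2 : (12:ℝ)^k ≤ ((729:ℝ)/4)^k :=
      pow_le_pow_left₀ (by norm_num) (by norm_num) k
    have e3 : (0:ℝ) ≤ ((729:ℝ)/4)^k := pow_nonneg (by norm_num) k
    rw [e1]; linarith
  have final : ∀ Q : ℝ, 0 ≤ Q → Q ≤ M →
      muSet p x y * muSet p z w ≤ 12^k * Q →
      muSet p x y * muSet p z w ≤ 4 * (27/2)^(2*k) * M := by
    intro Q hQ0 hQM hle
    have hM0 : 0 ≤ M := le_trans hQ0 hQM
    calc muSet p x y * muSet p z w ≤ 12^k * Q := hle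
      _ ≤ 12^k * M := by
          exact mul_le_mul_of_nonneg_left hQM (pow_nonneg (by norm_num) k)
      _ ≤ 4 * (27/2)^(2*k) * M := mul_le_mul_of_nonneg_right h12 hM0
  have hcase : (dist x z ≤ dist x w ∧ dist x z ≤ dist y z) ∨
      (dist y w ≤ dist y z ∧ dist y w ≤ dist x w) ∨
      (dist x w ≤ dist x z ∧ dist x w ≤ dist y w) ∨
      (dist y z ≤ dist y w ∧ dist y z ≤ dist x z) := by
    rcases le_total (dist x z) (dist y w) with h | h <;>
      rcases le_total (dist x z) (dist x w) with h' | h' <;>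
      rcases le_total (dist x z) (dist y z) with h'' | h'' <;>
      rcases le_total (dist y w) (dist x w) with g | g <;>
      rcases le_total (dist y w) (dist y z) with g' | g' <;>
      rcases le_total (dist x w) (dist y z) with f | f <;>
      first
        | (left; constructor <;> linarith)
        | (right; left; constructor <;> linarith)
        | (right; right; left; constructor <;> linarith)
        | (right; right; right; constructor <;> linarith)
  rcases hcase with ⟨u, v⟩ | ⟨u, v⟩ | ⟨u, v⟩ | ⟨u, v⟩
  · exact final _ (mul_nonneg (muSet_nonneg p x w) (muSet_nonneg p y z))
      (le_max_right _ _) (muSet_quad p x y z w u v)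
  · refine final _ (mul_nonneg (muSet_nonneg p x w) (muSet_nonneg p y z))
      (le_max_right _ _) ?_
    have := muSet_quad p y x w z u v
    rw [muSet_comm p y x, muSet_comm p w z] at this
    calc muSet p x y * muSet p z w ≤ 12^k * (muSet p y z * muSet p x w) := this
      _ = 12^k * (muSet p x w * muSet p y z) := by ring
  · refine final _ (mul_nonneg (muSet_nonneg p x z) (muSet_nonneg p y w))
      (le_max_left _ _) ?_
    have := muSet_quad p x y w z u v
    rw [muSet_comm p w z] at this
    exact this
  · refine final _ (mul_nonneg (muSet_nonneg p x z) (muSet_nonneg p y w))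
      (le_max_left _ _) ?_
    have := muSet_quad p y x z w u v
    rw [muSet_comm p y x] at this
    calc muSet p x y * muSet p z w ≤ 12^k * (muSet p y w * muSet p x z) := this
      _ = 12^k * (muSet p x z * muSet p y w) := by ring
end

section
/- Let (X,d) be a metric space, let p_1, …, p_k ∈ X (k ≥ 1), and let D = X∖{p_1, …, p_k}. Then the average scale-invariant Cassinian metric τ̂_D satisfies the Gromov four-point condition with constant δ = 3·log 3 + log 2; that is, for all x, y, z, w ∈ D, τ̂_D(x,y) + τ̂_D(z,w) ≤ max(τ̂_D(x,z) + τ̂_D(y,w), τ̂_D(x,w) + τ̂_D(y,z)) + 2·(3·log 3 + log 2). In particular, the constant does not depend on k. -/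
/-!
Write `N_p(x, y) = √(d(x,p) d(y,p)) + 2 d(x,y)`, so that
`τ_p(x,y) = log N_p(x,y) - (log d(x,p) + log d(y,p)) / 2`. In a four-point expression the
`log d(·,p)` terms cancel, and the Gromov condition for `τ_p` becomes the multiplicative bound
`N_p(x,y) N_p(z,w) ≤ 200 N_p(x,z) N_p(y,w)` whenever `d(x,w) d(y,z) ≤ d(x,z) d(y,w)`.
Up to bounded factors `N_p(x,y)` is the perimeter of the triangle `pxy`, and the bound for
perimeters follows from the triangle inequality. The side condition does not depend on `p`, so
one branch of the maximum works for every `p_i` at once, and the bound survives averaging.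
-/

noncomputable def tauOne {X : Type*} [MetricSpace X] (p x y : X) : ℝ :=
  Real.log (1 + 2 * dist x y / Real.sqrt (dist x p * dist y p))

noncomputable def tauHatAvg {X : Type*} [MetricSpace X] {k : ℕ}
    (p : Fin k → X) (x y : X) : ℝ :=
  (1 / k : ℝ) * ∑ i : Fin k, tauOne (p i) x y

open Real

section FourPoint

variable {X : Type*} [MetricSpace X] {p x y z w : X}

lemma dist_mul_dist_le_of_cross_le (h : dist x w * dist y z ≤ dist x z * dist y w) :
    dist y p * dist w p ≤
      3 * ((dist x p + dist z p + dist x z) * (dist y p + dist w p + dist y w)) := by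
  set P := dist x p + dist z p + dist x z
  set Q := dist y p + dist w p + dist y w
  have ha := dist_nonneg (x := x) (y := p)
  have hb := dist_nonneg (x := y) (y := p)
  have hc := dist_nonneg (x := z) (y := p)
  have hd := dist_nonneg (x := w) (y := p)
  have hu := dist_nonneg (x := x) (y := z)
  have hv := dist_nonneg (x := y) (y := w)
  have haP : dist x p ≤ P := by linarith
  have hcP : dist z p ≤ P := by linarith
  have huP : dist x z ≤ P := by linarith
  have hbQ : dist y p ≤ Q := by linarith
  have hdQ : dist w p ≤ Q := by linarith
  have hvQ : dist y w ≤ Q := by linarith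
  have hab : dist x p * dist y p ≤ P * Q := mul_le_mul haP hbQ hb (by linarith)
  have hcd : dist z p * dist w p ≤ P * Q := mul_le_mul hcP hdQ hd (by linarith)
  have huv : dist x z * dist y w ≤ P * Q := mul_le_mul huP hvQ hv (by linarith)
  rcases le_total (dist y p) (dist z p) with hyz | hyz
  · nlinarith [mul_le_mul_of_nonneg_right hyz hd]
  rcases le_total (dist w p) (dist x p) with hwx | hwx
  · nlinarith [mul_le_mul_of_nonneg_left hwx hb]
  -- with `a, b, c, d` the distances of `x, y, z, w` to `p`: `bd = (b - c)(d - a) + ab + cd - ac`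
  have hcross : (dist y p - dist z p) * (dist w p - dist x p) ≤ dist y z * dist x w := by
    refine mul_le_mul ?_ ?_ (sub_nonneg.2 hwx) dist_nonneg
    · linarith [dist_triangle y z p, dist_comm y z]
    · linarith [dist_triangle w x p, dist_comm w x]
  nlinarith [mul_nonneg ha hc]

lemma add_dist_mul_add_dist_le (h : dist x w * dist y z ≤ dist x z * dist y w) :
    (dist x p + dist y p) * (dist z p + dist w p) ≤
      8 * ((dist x p + dist z p + dist x z) * (dist y p + dist w p + dist y w)) := by
  have hbd := dist_mul_dist_le_of_cross_le (p := p) h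
  have hac := dist_mul_dist_le_of_cross_le (p := p) (x := y) (y := x) (z := w) (w := z)
    (by linarith [mul_comm (dist y z) (dist x w), mul_comm (dist y w) (dist x z)])
  have had : dist x p * dist w p ≤
      (dist x p + dist z p + dist x z) * (dist y p + dist w p + dist y w) :=
    mul_le_mul (by linarith [dist_nonneg (x := z) (y := p), dist_nonneg (x := x) (y := z)])
      (by linarith [dist_nonneg (x := y) (y := p), dist_nonneg (x := y) (y := w)])
      dist_nonneg (by positivity)
  have hbc : dist z p * dist y p ≤
      (dist x p + dist z p + dist x z) * (dist y p + dist w p + dist y w) :=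
    mul_le_mul (by linarith [dist_nonneg (x := x) (y := p), dist_nonneg (x := x) (y := z)])
      (by linarith [dist_nonneg (x := w) (y := p), dist_nonneg (x := y) (y := w)])
      dist_nonneg (by positivity)
  linarith [mul_comm (dist x p + dist z p + dist x z) (dist y p + dist w p + dist y w)]

end FourPoint

section CassinianNumerator

variable {X : Type*} [MetricSpace X]

noncomputable def cassinianNum (p x y : X) : ℝ :=
  √(dist x p * dist y p) + 2 * dist x y

lemma cassinianNum_nonneg (p x y : X) : 0 ≤ cassinianNum p x y := by
  rw [cassinianNum]
  positivity

lemma cassinianNum_le (p x y : X) :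
    cassinianNum p x y ≤ 5 / 2 * (dist x p + dist y p) := by
  have ha := dist_nonneg (x := x) (y := p)
  have hb := dist_nonneg (x := y) (y := p)
  have hgm : √(dist x p * dist y p) ≤ (dist x p + dist y p) / 2 :=
    Real.sqrt_le_iff.2 ⟨by positivity, by nlinarith [sq_nonneg (dist x p - dist y p)]⟩
  have hxy : dist x y ≤ dist x p + dist y p := dist_triangle_right x y p
  rw [cassinianNum]
  linarith

lemma perimeter_le_two_mul_cassinianNum (p x y : X) :
    dist x p + dist y p + dist x y ≤ 2 * cassinianNum p x y := by
  rw [cassinianNum]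
  wlog hxy : dist x p ≤ dist y p generalizing x y
  · have := this y x (by linarith)
    rwa [mul_comm (dist y p), dist_comm y x, add_comm (dist y p)] at this
  have hmin : dist x p ≤ √(dist x p * dist y p) :=
    (Real.le_sqrt dist_nonneg (by positivity)).2 (by nlinarith [dist_nonneg (x := x) (y := p)])
  linarith [dist_triangle_left y p x]

lemma cassinianNum_pos {p x : X} (hx : x ≠ p) (y : X) : 0 < cassinianNum p x y := by
  have := perimeter_le_two_mul_cassinianNum p x y
  linarith [dist_pos.2 hx, dist_nonneg (x := y) (y := p), dist_nonneg (x := x) (y := y)]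

lemma cassinianNum_mul_le {p x y z w : X} (h : dist x w * dist y z ≤ dist x z * dist y w) :
    cassinianNum p x y * cassinianNum p z w ≤
      200 * (cassinianNum p x z * cassinianNum p y w) := by
  have hxy := cassinianNum_le p x y
  have hzw := cassinianNum_le p z w
  have hxz := perimeter_le_two_mul_cassinianNum p x z
  have hyw := perimeter_le_two_mul_cassinianNum p y w
  have hperim := add_dist_mul_add_dist_le (p := p) h
  have hzw₀ := cassinianNum_nonneg p z w
  have hxz₀ := cassinianNum_nonneg p x z
  calc cassinianNum p x y * cassinianNum p z w
      ≤ (5 / 2 * (dist x p + dist y p)) * (5 / 2 * (dist z p + dist w p)) :=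
        mul_le_mul hxy hzw (by positivity) (by positivity)
    _ ≤ 50 * ((dist x p + dist z p + dist x z) * (dist y p + dist w p + dist y w)) := by
        nlinarith
    _ ≤ 50 * ((2 * cassinianNum p x z) * (2 * cassinianNum p y w)) := by
        gcongr
    _ = 200 * (cassinianNum p x z * cassinianNum p y w) := by ring

end CassinianNumerator

section SinglePoint

variable {X : Type*} [MetricSpace X] {p x y z w : X}

lemma tauOne_comm (p x y : X) : tauOne p x y = tauOne p y x := by
  rw [tauOne, tauOne, dist_comm x y, mul_comm (dist x p)]

lemma tauOne_eq_log_cassinianNum (hx : x ≠ p) (hy : y ≠ p) :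
    tauOne p x y = log (cassinianNum p x y) - (log (dist x p) + log (dist y p)) / 2 := by
  have hab : 0 < dist x p * dist y p := mul_pos (dist_pos.2 hx) (dist_pos.2 hy)
  have hsqrt : 0 < √(dist x p * dist y p) := Real.sqrt_pos.2 hab
  have hsplit : 1 + 2 * dist x y / √(dist x p * dist y p)
      = cassinianNum p x y / √(dist x p * dist y p) := by
    rw [cassinianNum]; field_simp
  rw [tauOne, hsplit, log_div (cassinianNum_pos hx y).ne' hsqrt.ne', log_sqrt hab.le,
    log_mul (dist_pos.2 hx).ne' (dist_pos.2 hy).ne']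

lemma tauOne_add_le (hx : x ≠ p) (hy : y ≠ p) (hz : z ≠ p) (hw : w ≠ p)
    (h : dist x w * dist y z ≤ dist x z * dist y w) :
    tauOne p x y + tauOne p z w ≤ tauOne p x z + tauOne p y w + log 200 := by
  have hxy := cassinianNum_pos hx y
  have hzw := cassinianNum_pos hz w
  have hxz := cassinianNum_pos hx z
  have hyw := cassinianNum_pos hy w
  have hlog := log_le_log (by positivity) (cassinianNum_mul_le (p := p) h)
  rw [log_mul hxy.ne' hzw.ne', log_mul (by norm_num) (by positivity),
    log_mul hxz.ne' hyw.ne'] at hlog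
  rw [tauOne_eq_log_cassinianNum hx hy, tauOne_eq_log_cassinianNum hz hw,
    tauOne_eq_log_cassinianNum hx hz, tauOne_eq_log_cassinianNum hy hw]
  linarith

end SinglePoint

section Average

variable {X : Type*} [MetricSpace X] {k : ℕ}

lemma tauHatAvg_comm (p : Fin k → X) (x y : X) : tauHatAvg p x y = tauHatAvg p y x := by
  simp only [tauHatAvg, tauOne_comm _ x y]

lemma tauHatAvg_add_le_of_forall {p : Fin k → X} {x y z w x' y' z' w' : X} {c : ℝ}
    (hc : 0 ≤ c) (h : ∀ i, tauOne (p i) x y + tauOne (p i) z w ≤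
      tauOne (p i) x' y' + tauOne (p i) z' w' + c) :
    tauHatAvg p x y + tauHatAvg p z w ≤ tauHatAvg p x' y' + tauHatAvg p z' w' + c := by
  rcases Nat.eq_zero_or_pos k with rfl | hk
  · simpa [tauHatAvg] using hc
  have hsum := Finset.sum_le_sum fun i (_ : i ∈ Finset.univ) => h i
  simp only [Finset.sum_add_distrib, Finset.sum_const, Finset.card_univ, Fintype.card_fin,
    nsmul_eq_mul] at hsum
  have hk' : (k : ℝ) ≠ 0 := Nat.cast_ne_zero.2 hk.ne'
  have := mul_le_mul_of_nonneg_left hsum (by positivity : (0 : ℝ) ≤ 1 / k)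
  rw [mul_add, mul_add, mul_add, ← mul_assoc, one_div_mul_cancel hk', one_mul] at this
  simpa only [tauHatAvg] using this

lemma tauHatAvg_add_le {p : Fin k → X} {x y z w : X}
    (hx : ∀ i, x ≠ p i) (hy : ∀ i, y ≠ p i) (hz : ∀ i, z ≠ p i) (hw : ∀ i, w ≠ p i)
    (h : dist x w * dist y z ≤ dist x z * dist y w) :
    tauHatAvg p x y + tauHatAvg p z w ≤ tauHatAvg p x z + tauHatAvg p y w + log 200 :=
  tauHatAvg_add_le_of_forall (log_nonneg (by norm_num))
    fun i => tauOne_add_le (hx i) (hy i) (hz i) (hw i) h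

end Average

lemma log_two_hundred_le : log 200 ≤ 2 * (3 * log 3 + log 2) := by
  have h2916 : 2 * (3 * log 3 + log 2) = log ((3 : ℝ) ^ 6 * 2 ^ 2) := by
    rw [log_mul (by norm_num) (by norm_num), log_pow, log_pow]
    push_cast
    ring
  rw [h2916]
  exact log_le_log (by norm_num) (by norm_num)

theorem stmt15_general {X : Type*} [MetricSpace X] (k : ℕ)
    (p : Fin k → X) (x y z w : X)
    (hx : ∀ i, x ≠ p i) (hy : ∀ i, y ≠ p i)
    (hz : ∀ i, z ≠ p i) (hw : ∀ i, w ≠ p i) :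
    tauHatAvg p x y + tauHatAvg p z w ≤
      max (tauHatAvg p x z + tauHatAvg p y w)
        (tauHatAvg p x w + tauHatAvg p y z) +
        2 * (3 * Real.log 3 + Real.log 2) := by
  rcases le_total (dist x w * dist y z) (dist x z * dist y w) with hc | hc
  · have := tauHatAvg_add_le hx hy hz hw hc
    linarith [le_max_left (tauHatAvg p x z + tauHatAvg p y w)
      (tauHatAvg p x w + tauHatAvg p y z), log_two_hundred_le]
  · have := tauHatAvg_add_le hx hy hw hz hc
    rw [tauHatAvg_comm p w z] at this
    linarith [le_max_right (tauHatAvg p x z + tauHatAvg p y w)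
      (tauHatAvg p x w + tauHatAvg p y z), log_two_hundred_le]

theorem stmt15 {X : Type*} [MetricSpace X] (k : ℕ) (hk : 1 ≤ k)
    (p : Fin k → X) (x y z w : X)
    (hx : ∀ i, x ≠ p i) (hy : ∀ i, y ≠ p i)
    (hz : ∀ i, z ≠ p i) (hw : ∀ i, w ≠ p i) :
    tauHatAvg p x y + tauHatAvg p z w ≤
      max (tauHatAvg p x z + tauHatAvg p y w)
        (tauHatAvg p x w + tauHatAvg p y z) +
        2 * (3 * Real.log 3 + Real.log 2) :=
  stmt15_general k p x y z w hx hy hz hw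
end
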